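/- arXiv:1701.01307 — 2 statements merged into one kernel-verified Lean document; each statement's English description precedes it below -/
import Mathlib

section
/- Let n ≥ 1 and let G₀ = G_{0ⁿ} be the set associated with the word consisting of n zeros. For any sequence (ℓ_s)_{s∈ℤ} of real numbers, let J' = {(r + ℓ_s, s/pⁿ) : r, s ∈ ℤ} ⊆ ℝ². Then ⋃_{t∈J'} (G₀ + t) = ℝ², and for any two distinct t, t' ∈ J' the intersection (G₀ + t) ∩ (G₀ + t') has two-dimensional Lebesgue measure zero; in particular G₀ is a self-similar tile. -/
/-!
Write `S(c) = ∑ₖ cₖ p⁻ᵏ⁻¹`. Unwinding the maps `f_{i,0}`, `G_{0ⁿ}` is the set of points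
`(S(I) + p⁻ⁿ S(b ∘ j), p⁻ⁿ S(j))` with digits `I, j` in `{-m, …, m}`. Balanced base-`p` digit
sequences represent every number of `[-1/2, 1/2)` (by rounding `pᴺ u`), and since
`m / (p - 1) = 1/2`, two different sequences with the same value `v` must have tails of value
`±1/2`, so `v` is rational. Hence choosing `s = round (pⁿ y)` and then `r` by rounding again covers
the plane; and if `y` is irrational, a point `(x, y)` of two translates forces the same `s` and the
same digits `j`, so the two translates differ by an integer `r` and the point lies on a graph
`x = r + ℓ_s + offset(y) ± 1/2` of a measurable function. Rational heights and such graphs are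
Lebesgue-null.
-/

noncomputable section

/-- `b_j = ε` if `j` is odd and `b_j = 0` if `j` is even. -/
def bshift (ε : ℝ) (j : ℤ) : ℝ := if Odd j then ε else 0

/-- The self-similar set `T_ε` associated with `p = 2m+1` and the shift `ε`. -/
def Tset (p : ℤ) (m : ℕ) (ε : ℝ) : Set (ℝ × ℝ) :=
  { z | ∃ i j : ℕ → ℤ, (∀ k, |i k| ≤ (m : ℤ)) ∧ (∀ k, |j k| ≤ (m : ℤ)) ∧
      z.1 = ∑' k : ℕ, ((p : ℝ) ^ (k + 1))⁻¹ * ((i k : ℝ) + bshift ε (j k)) ∧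
      z.2 = ∑' k : ℕ, ((p : ℝ) ^ (k + 1))⁻¹ * (j k : ℝ) }

/-- The map `f_{i,j}(x, y) = ((x + i + b_j)/p, (y + j)/p)`. -/
def fmap (p : ℤ) (ε : ℝ) (i j : ℤ) (z : ℝ × ℝ) : ℝ × ℝ :=
  ((z.1 + (i : ℝ) + bshift ε j) / (p : ℝ), (z.2 + (j : ℝ)) / (p : ℝ))

/-- For a word `j₁ ⋯ j_n` (a list of integers in `{-m, …, m}`),
`G_{j₁⋯j_n} = ⋃_{i₁,…,i_n ∈ {-m,…,m}} f_{i₁,j₁} ∘ ⋯ ∘ f_{i_n,j_n}(T_ε)`. -/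
def Gset (p : ℤ) (m : ℕ) (ε : ℝ) : List ℤ → Set (ℝ × ℝ)
  | [] => Tset p m ε
  | j :: w => ⋃ i ∈ Finset.Icc (-(m : ℤ)) (m : ℤ), fmap p ε i j '' Gset p m ε w

open MeasureTheory Set Filter Topology

def digitValue (P : ℝ) (c : ℕ → ℝ) : ℝ := ∑' k, (P ^ (k + 1))⁻¹ * c k

section DigitValue

variable {P M : ℝ} {c d : ℕ → ℝ}

lemma hasSum_inv_pow_succ (hP : 1 < P) : HasSum (fun k : ℕ => (P ^ (k + 1))⁻¹) (P - 1)⁻¹ := by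
  have hP0 : 0 < P := zero_lt_one.trans hP
  have h := (hasSum_geometric_of_lt_one (inv_nonneg.2 hP0.le) (inv_lt_one_of_one_lt₀ hP)).mul_left
    P⁻¹
  have hterm : (fun k : ℕ => (P ^ (k + 1))⁻¹) = fun k => P⁻¹ * P⁻¹ ^ k := by
    ext k; rw [pow_succ', mul_inv, inv_pow]
  rw [hterm]
  rwa [← mul_inv, mul_sub, mul_one, mul_inv_cancel₀ hP0.ne'] at h

lemma summable_digitValue (hP : 1 < P) (hc : ∀ k, |c k| ≤ M) :
    Summable fun k => (P ^ (k + 1))⁻¹ * c k := by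
  refine Summable.of_norm_bounded ((hasSum_inv_pow_succ hP).summable.mul_right M) fun k => ?_
  rw [norm_mul, norm_inv, norm_pow, Real.norm_of_nonneg (zero_lt_one.trans hP).le]
  exact mul_le_mul_of_nonneg_left (hc k) (by positivity)

lemma abs_digitValue_le (hP : 1 < P) (hc : ∀ k, |c k| ≤ M) : |digitValue P c| ≤ M / (P - 1) := by
  rw [← Real.norm_eq_abs, div_eq_inv_mul, digitValue]
  refine tsum_of_norm_bounded ((hasSum_inv_pow_succ hP).mul_right M) fun k => ?_
  rw [norm_mul, norm_inv, norm_pow, Real.norm_of_nonneg (zero_lt_one.trans hP).le]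
  exact mul_le_mul_of_nonneg_left (hc k) (by positivity)

lemma digitValue_add (hP : 1 < P) (hc : ∀ k, |c k| ≤ M) {M' : ℝ} (hd : ∀ k, |d k| ≤ M') :
    digitValue P (fun k => c k + d k) = digitValue P c + digitValue P d := by
  simp only [digitValue, mul_add]
  exact (summable_digitValue hP hc).tsum_add (summable_digitValue hP hd)

lemma digitValue_eq_sum_add (hP : 1 < P) (hc : ∀ k, |c k| ≤ M) (N : ℕ) :
    digitValue P c = ∑ k ∈ Finset.range N, (P ^ (k + 1))⁻¹ * c k
      + (P ^ N)⁻¹ * digitValue P (fun k => c (k + N)) := by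
  rw [digitValue, digitValue, ← (summable_digitValue hP hc).sum_add_tsum_nat_add N,
    ← tsum_mul_left]
  congr 1
  refine tsum_congr fun k => ?_
  rw [show k + N + 1 = N + (k + 1) by ring, pow_add, mul_inv, mul_assoc]

lemma digitValue_eq_inv_mul (hP : 1 < P) (hc : ∀ k, |c k| ≤ M) :
    digitValue P c = P⁻¹ * (c 0 + digitValue P fun k => c (k + 1)) := by
  rw [digitValue_eq_sum_add hP hc 1]
  simp only [Finset.sum_range_one, zero_add, pow_one]
  ring

end DigitValue

section BalancedDigit

variable {m : ℕ} {p : ℤ}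

lemma one_lt_of_eq_two_mul_add_one (hm : 1 ≤ m) (hp : p = 2 * m + 1) : (1 : ℝ) < p := by
  have : (1 : ℝ) ≤ m := by exact_mod_cast hm
  rw [hp]; push_cast; linarith

lemma abs_digitValue_le_half (hm : 1 ≤ m) (hp : p = 2 * m + 1) {c : ℕ → ℤ}
    (hc : ∀ k, |c k| ≤ m) : |digitValue p fun k => (c k : ℝ)| ≤ 1 / 2 := by
  have hm0 : (0 : ℝ) < m := by exact_mod_cast hm
  have h := abs_digitValue_le (one_lt_of_eq_two_mul_add_one hm hp) (M := m)
    (c := fun k => (c k : ℝ)) fun k => by exact_mod_cast hc k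
  rwa [show (p : ℝ) - 1 = 2 * m by rw [hp]; push_cast; ring, div_mul_cancel_right₀ hm0.ne',
    ← one_div] at h

/-- The `k`-th digit of the balanced base-`p` expansion of `u - round u`: the partial sums
telescope to `p⁻ᴺ * round (pᴺ * u)`. -/
def balancedDigit (p : ℤ) (u : ℝ) (k : ℕ) : ℤ :=
  round ((p : ℝ) ^ (k + 1) * u) - p * round ((p : ℝ) ^ k * u)

lemma abs_balancedDigit_le (hp : p = 2 * m + 1) (u : ℝ) (k : ℕ) : |balancedDigit p u k| ≤ m := by
  set x := (p : ℝ) ^ k * u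
  have hdigit : balancedDigit p u k = round (p * (x - round x)) := by
    rw [balancedDigit, mul_sub, ← round_sub_intCast, pow_succ, mul_comm _ (p : ℝ), mul_assoc]
    push_cast; rfl
  have hx := round_eq_iff.mp (rfl : round x = round x)
  have hd := round_eq_iff.mp (rfl : round (p * (x - round x)) = _)
  rw [← hdigit] at hd
  have hpR : (p : ℝ) = 2 * m + 1 := by rw [hp]; push_cast; ring
  obtain ⟨hx1, hx2⟩ := hx
  obtain ⟨hd1, hd2⟩ := hd
  have hy1 : -(m : ℝ) - 1 / 2 ≤ p * (x - round x) := by rw [hpR]; nlinarith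
  have hy2 : p * (x - round x) < (m : ℝ) + 1 / 2 := by rw [hpR]; nlinarith
  have h1 : (balancedDigit p u k : ℝ) < m + 1 := by linarith
  have h2 : -(m : ℝ) - 1 < balancedDigit p u k := by linarith
  rw [abs_le]
  constructor
  · have : -(m : ℤ) - 1 < balancedDigit p u k := by exact_mod_cast h2
    omega
  · have : balancedDigit p u k < (m : ℤ) + 1 := by exact_mod_cast h1
    omega

lemma measurable_balancedDigit (p : ℤ) (k : ℕ) : Measurable fun u => balancedDigit p u k := by
  simp only [balancedDigit, round_eq]
  fun_prop

lemma digitValue_balancedDigit (hm : 1 ≤ m) (hp : p = 2 * m + 1) (u : ℝ) :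
    digitValue p (fun k => (balancedDigit p u k : ℝ)) = u - round u := by
  have hP := one_lt_of_eq_two_mul_add_one hm hp
  have hP0 : (p : ℝ) ≠ 0 := (zero_lt_one.trans hP).ne'
  have hsum := summable_digitValue hP (M := m) (c := fun k => (balancedDigit p u k : ℝ))
    fun k => by exact_mod_cast abs_balancedDigit_le hp u k
  have htelescope : ∀ N, ∑ k ∈ Finset.range N, ((p : ℝ) ^ (k + 1))⁻¹ * balancedDigit p u k
      = ((p : ℝ) ^ N)⁻¹ * round ((p : ℝ) ^ N * u) - round u := by
    intro N
    have h := Finset.sum_range_sub (fun k => ((p : ℝ) ^ k)⁻¹ * round ((p : ℝ) ^ k * u)) N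
    simp only [pow_zero, inv_one, one_mul] at h
    rw [← h]
    refine Finset.sum_congr rfl fun k _ => ?_
    simp only [balancedDigit, Int.cast_sub, Int.cast_mul]
    field_simp
    ring
  have herror : Tendsto (fun N : ℕ => ((p : ℝ) ^ N)⁻¹ * ((p : ℝ) ^ N * u - round ((p : ℝ) ^ N * u)))
      atTop (𝓝 0) := by
    have hinv : Tendsto (fun N : ℕ => ((p : ℝ) ^ N)⁻¹) atTop (𝓝 0) :=
      tendsto_inv_atTop_zero.comp (tendsto_pow_atTop_atTop_of_one_lt hP)
    refine squeeze_zero_norm (a := fun N => ((p : ℝ) ^ N)⁻¹ * (1 / 2)) (fun N => ?_)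
      (by simpa using hinv.mul_const (1 / 2 : ℝ))
    rw [norm_mul, norm_inv, norm_pow, Real.norm_of_nonneg (zero_lt_one.trans hP).le,
      Real.norm_eq_abs]
    exact mul_le_mul_of_nonneg_left (abs_sub_round _) (by positivity)
  refine tendsto_nhds_unique hsum.hasSum.tendsto_sum_nat ?_
  simp_rw [htelescope]
  convert (herror.const_sub u).sub_const (round u : ℝ) using 2 with N
  · field_simp
    ring
  · simp

lemma abs_digitValue_tail_eq_half (hm : 1 ≤ m) (hp : p = 2 * m + 1) {c c' : ℕ → ℤ}
    (hc : ∀ k, |c k| ≤ m) (hc' : ∀ k, |c' k| ≤ m)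
    (h : digitValue p (fun k => (c k : ℝ)) = digitValue p (fun k => (c' k : ℝ))) {k₀ : ℕ}
    (hpre : ∀ k < k₀, c k = c' k) (hne : c k₀ ≠ c' k₀) :
    |digitValue p fun k => (c (k + (k₀ + 1)) : ℝ)| = 1 / 2 := by
  have hP := one_lt_of_eq_two_mul_add_one hm hp
  have hcR : ∀ k, |(c k : ℝ)| ≤ m := fun k => by exact_mod_cast hc k
  have hcR' : ∀ k, |(c' k : ℝ)| ≤ m := fun k => by exact_mod_cast hc' k
  have hprefix : ∑ k ∈ Finset.range k₀, ((p : ℝ) ^ (k + 1))⁻¹ * c k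
      = ∑ k ∈ Finset.range k₀, ((p : ℝ) ^ (k + 1))⁻¹ * c' k :=
    Finset.sum_congr rfl fun k hk => by rw [hpre k (Finset.mem_range.mp hk)]
  rw [digitValue_eq_sum_add hP hcR (k₀ + 1), digitValue_eq_sum_add hP hcR' (k₀ + 1),
    Finset.sum_range_succ, Finset.sum_range_succ, hprefix] at h
  set u := digitValue p fun k => (c (k + (k₀ + 1)) : ℝ)
  set u' := digitValue p fun k => (c' (k + (k₀ + 1)) : ℝ)
  have hdiff : ((c k₀ - c' k₀ : ℤ) : ℝ) = u' - u := by
    have hpos : ((p : ℝ) ^ (k₀ + 1))⁻¹ ≠ 0 := by positivity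
    push_cast
    have := mul_left_cancel₀ hpos (by linarith : ((p : ℝ) ^ (k₀ + 1))⁻¹ * (c k₀ + u)
      = ((p : ℝ) ^ (k₀ + 1))⁻¹ * (c' k₀ + u'))
    linarith
  have hu := abs_le.mp (abs_digitValue_le_half hm hp fun k => hc (k + (k₀ + 1)))
  have hu' := abs_le.mp (abs_digitValue_le_half hm hp fun k => hc' (k + (k₀ + 1)))
  have hle : |c k₀ - c' k₀| ≤ 1 := by
    have : |((c k₀ - c' k₀ : ℤ) : ℝ)| ≤ 1 := by rw [hdiff, abs_le]; constructor <;> linarith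
    exact_mod_cast this
  rw [abs_eq (by norm_num)]
  rcases (by rw [abs_le] at hle; omega : c k₀ - c' k₀ = 1 ∨ c k₀ - c' k₀ = -1) with h1 | h1
  · rw [h1] at hdiff; push_cast at hdiff; right; linarith
  · rw [h1] at hdiff; push_cast at hdiff; left; linarith

lemma eq_of_digitValue_eq_of_irrational (hm : 1 ≤ m) (hp : p = 2 * m + 1) {c c' : ℕ → ℤ}
    (hc : ∀ k, |c k| ≤ m) (hc' : ∀ k, |c' k| ≤ m)
    (h : digitValue p (fun k => (c k : ℝ)) = digitValue p (fun k => (c' k : ℝ)))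
    (hirr : Irrational (digitValue p fun k => (c k : ℝ))) : c = c' := by
  by_contra hne
  have hex : ∃ k, c k ≠ c' k := Function.ne_iff.mp hne
  have htail := abs_digitValue_tail_eq_half hm hp hc hc' h
    (fun k hk => not_not.mp (Nat.find_min hex hk)) (Nat.find_spec hex)
  set k₀ := Nat.find hex
  obtain ⟨v, hv⟩ : ∃ v : ℚ, (digitValue p fun k => (c (k + (k₀ + 1)) : ℝ)) = v := by
    rcases (abs_eq (by norm_num)).mp htail with h | h
    exacts [⟨1 / 2, by rw [h]; push_cast; ring⟩, ⟨-1 / 2, by rw [h]; push_cast; ring⟩]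
  refine hirr.ne_rat
    (∑ k ∈ Finset.range (k₀ + 1), ((p : ℚ) ^ (k + 1))⁻¹ * c k + ((p : ℚ) ^ (k₀ + 1))⁻¹ * v) ?_
  rw [digitValue_eq_sum_add (one_lt_of_eq_two_mul_add_one hm hp) (M := m)
    (fun k => by exact_mod_cast hc k) (k₀ + 1), hv]
  push_cast
  rfl

end BalancedDigit

section Tile

variable {m : ℕ} {p : ℤ} {ε : ℝ}

lemma abs_bshift_le (ε : ℝ) (j : ℤ) : |bshift ε j| ≤ |ε| := by
  unfold bshift; split_ifs <;> simp

lemma fmap_zero (p : ℤ) (ε : ℝ) (i : ℤ) (z : ℝ × ℝ) :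
    fmap p ε i 0 z = ((z.1 + i) / p, z.2 / p) := by
  simp [fmap, bshift]

lemma Tset_eq (hP : 1 < (p : ℝ)) : Tset p m ε =
    {z | ∃ i j : ℕ → ℤ, (∀ k, |i k| ≤ m) ∧ (∀ k, |j k| ≤ m) ∧
      z.1 = digitValue p (fun k => (i k : ℝ)) + digitValue p (fun k => bshift ε (j k)) ∧
      z.2 = digitValue p fun k => (j k : ℝ)} := by
  ext z
  refine exists₂_congr fun i j => and_congr_right fun hi => and_congr_right fun _ => ?_
  rw [← digitValue_add hP (M := m) (fun k => by exact_mod_cast hi k) fun k => abs_bshift_le ε (j k)]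
  rfl

lemma Gset_replicate_zero (hP : 1 < (p : ℝ)) (n : ℕ) : Gset p m ε (List.replicate n 0) =
    {z | ∃ I j : ℕ → ℤ, (∀ k, |I k| ≤ m) ∧ (∀ k, |j k| ≤ m) ∧
      z.1 = digitValue p (fun k => (I k : ℝ))
        + ((p : ℝ) ^ n)⁻¹ * digitValue p (fun k => bshift ε (j k)) ∧
      z.2 = ((p : ℝ) ^ n)⁻¹ * digitValue p fun k => (j k : ℝ)} := by
  have hP0 : (p : ℝ) ≠ 0 := (zero_lt_one.trans hP).ne'
  induction n with
  | zero =>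
    simp only [List.replicate_zero, Gset, pow_zero, inv_one, one_mul]
    exact Tset_eq hP
  | succ n ih =>
    rw [List.replicate_succ, Gset, ih]
    ext z
    simp only [mem_iUnion, mem_image, mem_ofPred_eq, Finset.mem_Icc, exists_prop]
    constructor
    · rintro ⟨i, hi, w, ⟨I, j, hI, hj, hw1, hw2⟩, rfl⟩
      have hcons : ∀ k, |(Stream'.cons i I : ℕ → ℤ) k| ≤ m := by
        rintro (_ | k)
        exacts [abs_le.mpr hi, hI k]
      refine ⟨Stream'.cons i I, j, hcons, hj, ?_, ?_⟩
      · rw [digitValue_eq_inv_mul hP (M := m) fun k => by exact_mod_cast hcons k, fmap_zero]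
        change (w.1 + i) / p = (p : ℝ)⁻¹ * (i + digitValue p fun k => (I k : ℝ)) + _
        rw [hw1, pow_succ, mul_inv]
        field_simp
        ring
      · rw [fmap_zero, hw2, pow_succ, mul_inv]
        field_simp
    · rintro ⟨I, j, hI, hj, h1, h2⟩
      refine ⟨I 0, abs_le.mp (hI 0), (digitValue p (fun k => (I (k + 1) : ℝ))
        + ((p : ℝ) ^ n)⁻¹ * digitValue p (fun k => bshift ε (j k)),
        ((p : ℝ) ^ n)⁻¹ * digitValue p fun k => (j k : ℝ)),
        ⟨fun k => I (k + 1), j, fun k => hI (k + 1), hj, rfl, rfl⟩, ?_⟩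
      rw [digitValue_eq_inv_mul hP (M := m) fun k => by exact_mod_cast hI k] at h1
      rw [fmap_zero]
      refine Prod.ext ?_ ?_
      · rw [h1, pow_succ, mul_inv]
        field_simp
        ring
      · rw [h2, pow_succ, mul_inv]
        field_simp

lemma mem_translate_Gset_replicate_zero_iff (hP : 1 < (p : ℝ)) {n : ℕ} {a : ℝ} {s : ℤ}
    {z : ℝ × ℝ} : z ∈ (· + (a, (s : ℝ) / (p : ℝ) ^ n)) '' Gset p m ε (List.replicate n 0) ↔
      ∃ I j : ℕ → ℤ, (∀ k, |I k| ≤ m) ∧ (∀ k, |j k| ≤ m) ∧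
        z.1 - a = digitValue p (fun k => (I k : ℝ))
          + ((p : ℝ) ^ n)⁻¹ * digitValue p (fun k => bshift ε (j k)) ∧
        (p : ℝ) ^ n * z.2 - s = digitValue p fun k => (j k : ℝ) := by
  have hpn : (p : ℝ) ^ n ≠ 0 := pow_ne_zero n (zero_lt_one.trans hP).ne'
  rw [image_add_right, mem_preimage, Gset_replicate_zero hP]
  refine exists₂_congr fun I j => and_congr_right' <| and_congr_right' <|
    and_congr (by rw [Prod.fst_add, Prod.fst_neg, ← sub_eq_add_neg]) ?_
  rw [Prod.snd_add, Prod.snd_neg, eq_inv_mul_iff_mul_eq₀ hpn]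
  constructor <;> intro h <;> rw [← h] <;> field_simp <;> ring

/-- The horizontal offset `p⁻ⁿ S(b ∘ j)` of `G_{0ⁿ}` at height `y`, for `j` the balanced digits
of `pⁿ y`; at irrational heights no other `j` occurs. -/
lemma Irrational.pow_mul_sub_intCast {y : ℝ} (hirr : Irrational y) (hp : p ≠ 0) (n : ℕ)
    (s : ℤ) : Irrational ((p : ℝ) ^ n * y - s) := by
  simpa using (hirr.intCast_mul (pow_ne_zero n hp)).sub_intCast s

def rowOffset (p : ℤ) (ε : ℝ) (n : ℕ) (y : ℝ) : ℝ :=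
  ((p : ℝ) ^ n)⁻¹ * digitValue p fun k => bshift ε (balancedDigit p ((p : ℝ) ^ n * y) k)

lemma measurable_rowOffset (p : ℤ) (ε : ℝ) (n : ℕ) : Measurable (rowOffset p ε n) := by
  unfold rowOffset digitValue
  refine (Measurable.tsum fun k => ?_).const_mul _
  have hdigit : Measurable fun y : ℝ => balancedDigit p ((p : ℝ) ^ n * y) k :=
    (measurable_balancedDigit p k).comp (measurable_const_mul _)
  exact ((measurable_of_countable (bshift ε)).comp hdigit).const_mul _

lemma exists_mem_translate_Gset_replicate_zero (hm : 1 ≤ m) (hp : p = 2 * m + 1)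
    (ℓ : ℤ → ℝ) (n : ℕ) (z : ℝ × ℝ) : ∃ r s : ℤ,
      z ∈ (· + ((r : ℝ) + ℓ s, (s : ℝ) / (p : ℝ) ^ n)) '' Gset p m ε (List.replicate n 0) := by
  set u := (p : ℝ) ^ n * z.2
  set w := z.1 - ℓ (round u) - rowOffset p ε n z.2
  refine ⟨round w, round u, (mem_translate_Gset_replicate_zero_iff
    (one_lt_of_eq_two_mul_add_one hm hp)).mpr ⟨fun k => balancedDigit p w k,
    fun k => balancedDigit p u k, abs_balancedDigit_le hp w, abs_balancedDigit_le hp u, ?_,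
    (digitValue_balancedDigit hm hp u).symm⟩⟩
  rw [digitValue_balancedDigit hm hp w]
  simp only [w, rowOffset, u]
  ring

lemma round_eq_of_mem_translate_Gset_replicate_zero (hm : 1 ≤ m) (hp : p = 2 * m + 1) {n : ℕ}
    {a : ℝ} {s : ℤ} {z : ℝ × ℝ}
    (hz : z ∈ (· + (a, (s : ℝ) / (p : ℝ) ^ n)) '' Gset p m ε (List.replicate n 0))
    (hirr : Irrational z.2) :
    round ((p : ℝ) ^ n * z.2) = s := by
  obtain ⟨I, j, hI, hj, -, hy⟩ :=
    (mem_translate_Gset_replicate_zero_iff (one_lt_of_eq_two_mul_add_one hm hp)).mp hz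
  have hirr' := hirr.pow_mul_sub_intCast (p := p) (by omega) n s
  have hbound := abs_le.mp (abs_digitValue_le_half hm hp hj)
  rw [← hy] at hbound
  rw [round_eq_iff]
  constructor
  · linarith
  · exact lt_of_le_of_ne (by linarith) fun h => hirr'.ne_rat (1 / 2) (by push_cast; linarith)

lemma abs_sub_rowOffset_le_of_mem_translate_Gset_replicate_zero (hm : 1 ≤ m)
    (hp : p = 2 * m + 1) {n : ℕ} {a : ℝ} {s : ℤ} {z : ℝ × ℝ}
    (hz : z ∈ (· + (a, (s : ℝ) / (p : ℝ) ^ n)) '' Gset p m ε (List.replicate n 0))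
    (hirr : Irrational z.2) :
    |z.1 - a - rowOffset p ε n z.2| ≤ 1 / 2 := by
  have hround := round_eq_of_mem_translate_Gset_replicate_zero hm hp hz hirr
  obtain ⟨I, j, hI, hj, hx, hy⟩ :=
    (mem_translate_Gset_replicate_zero_iff (one_lt_of_eq_two_mul_add_one hm hp)).mp hz
  have hirr' := hirr.pow_mul_sub_intCast (p := p) (by omega) n s
  have hj_eq : j = fun k => balancedDigit p ((p : ℝ) ^ n * z.2) k :=
    eq_of_digitValue_eq_of_irrational hm hp hj (abs_balancedDigit_le hp _)
      (by rw [← hy, digitValue_balancedDigit hm hp, hround]) (hy ▸ hirr')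
  subst hj_eq
  rw [rowOffset, hx, add_sub_cancel_right]
  exact abs_digitValue_le_half hm hp hI

lemma measure_prod_graph_eq_zero {β : Type*} [MeasurableSpace β] {μ : Measure ℝ}
    [NullSingletonClass μ] [SFinite μ] {ν : Measure β} [SFinite ν] {g : β → ℝ} (hg : Measurable g) :
    μ.prod ν {z | z.1 = g z.2} = 0 := by
  have hs : MeasurableSet {z : ℝ × β | z.1 = g z.2} :=
    measurableSet_eq_fun measurable_fst (hg.comp measurable_snd)
  rw [Measure.prod_apply_symm hs]
  simp

lemma eq_add_half_or_eq_sub_half {x : ℝ} {r r' : ℤ} (h : |x - r| ≤ 1 / 2) (h' : |x - r'| ≤ 1 / 2)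
    (hr : r ≠ r') : x = r + 1 / 2 ∨ x = r - 1 / 2 := by
  rw [abs_le] at h h'
  have hle : |r - r'| ≤ 1 := by
    have : |((r - r' : ℤ) : ℝ)| ≤ 1 := by push_cast; rw [abs_le]; constructor <;> linarith
    exact_mod_cast this
  rcases (by rw [abs_le] at hle; omega : r' = r + 1 ∨ r' = r - 1) with rfl | rfl
  · left; push_cast at h'; linarith
  · right; push_cast at h'; linarith

lemma volume_translate_inter_translate_Gset_replicate_zero (hm : 1 ≤ m) (hp : p = 2 * m + 1)
    (ℓ : ℤ → ℝ) {n : ℕ} {r s r' s' : ℤ}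
    (hne : ((r : ℝ) + ℓ s, (s : ℝ) / (p : ℝ) ^ n) ≠ ((r' : ℝ) + ℓ s', (s' : ℝ) / (p : ℝ) ^ n)) :
    volume (((· + ((r : ℝ) + ℓ s, (s : ℝ) / (p : ℝ) ^ n)) '' Gset p m ε (List.replicate n 0)) ∩
      ((· + ((r' : ℝ) + ℓ s', (s' : ℝ) / (p : ℝ) ^ n)) '' Gset p m ε (List.replicate n 0))) =
        0 := by
  set g : ℝ → ℝ := fun y => r + ℓ s + rowOffset p ε n y
  refine measure_mono_null (t := Prod.snd ⁻¹' range ((↑) : ℚ → ℝ) ∪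
    ({z | z.1 = (g · + 1 / 2) z.2} ∪ {z | z.1 = (g · - 1 / 2) z.2})) ?_ ?_
  · rintro z ⟨hz, hz'⟩
    by_cases hirr : Irrational z.2
    swap
    · exact Or.inl (not_not.mp hirr)
    right
    obtain rfl : s = s' :=
      (round_eq_of_mem_translate_Gset_replicate_zero hm hp hz hirr).symm.trans
        (round_eq_of_mem_translate_Gset_replicate_zero hm hp hz' hirr)
    have hr : r ≠ r' := fun h => hne (h ▸ rfl)
    have h : |z.1 - ℓ s - rowOffset p ε n z.2 - r| ≤ 1 / 2 := by
      convert abs_sub_rowOffset_le_of_mem_translate_Gset_replicate_zero hm hp hz hirr using 2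
      ring
    have h' : |z.1 - ℓ s - rowOffset p ε n z.2 - r'| ≤ 1 / 2 := by
      convert abs_sub_rowOffset_le_of_mem_translate_Gset_replicate_zero hm hp hz' hirr using 2
      ring
    rcases eq_add_half_or_eq_sub_half h h' hr with h | h
    · left; simp only [mem_ofPred_eq, g]; linarith
    · right; simp only [mem_ofPred_eq, g]; linarith
  · have hg : Measurable g := (measurable_rowOffset p ε n).const_add _
    rw [Measure.volume_eq_prod]
    exact measure_union_null
      (Measure.quasiMeasurePreserving_snd.preimage_null ((countable_range _).measure_zero _))
      (measure_union_null (measure_prod_graph_eq_zero (hg.add_const _))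
        (measure_prod_graph_eq_zero (hg.sub_const _)))

end Tile

theorem stmt9_general (m : ℕ) (hm : 1 ≤ m) (p : ℤ) (hp : p = 2 * (m : ℤ) + 1) (ε : ℝ)
    (n : ℕ) (ℓ : ℤ → ℝ) :
    (⋃ t ∈ {t : ℝ × ℝ | ∃ r s : ℤ, t = ((r : ℝ) + ℓ s, (s : ℝ) / (p : ℝ) ^ n)},
        (· + t) '' Gset p m ε (List.replicate n 0)) = Set.univ ∧
    ∀ t ∈ {t : ℝ × ℝ | ∃ r s : ℤ, t = ((r : ℝ) + ℓ s, (s : ℝ) / (p : ℝ) ^ n)},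
      ∀ t' ∈ {t : ℝ × ℝ | ∃ r s : ℤ, t = ((r : ℝ) + ℓ s, (s : ℝ) / (p : ℝ) ^ n)}, t ≠ t' →
        MeasureTheory.volume
          (((· + t) '' Gset p m ε (List.replicate n 0)) ∩
            ((· + t') '' Gset p m ε (List.replicate n 0))) = 0 := by
  refine ⟨eq_univ_of_forall fun z => ?_, ?_⟩
  · obtain ⟨r, s, hz⟩ := exists_mem_translate_Gset_replicate_zero hm hp ℓ n z
    exact mem_iUnion₂.mpr ⟨_, ⟨r, s, rfl⟩, hz⟩
  · rintro _ ⟨r, s, rfl⟩ _ ⟨r', s', rfl⟩ hne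
    exact volume_translate_inter_translate_Gset_replicate_zero hm hp ℓ hne

/-- for any sequence `(ℓ_s)_{s∈ℤ}`, the translates of `G₀ = G_{0ⁿ}` by
`J' = {(r + ℓ_s, s/pⁿ) : r, s ∈ ℤ}` cover `ℝ²` and are pairwise measure-disjoint;
in particular `G₀` is a self-similar tile. -/
theorem stmt9 (m : ℕ) (hm : 1 ≤ m) (p : ℤ) (hp : p = 2 * (m : ℤ) + 1) (ε : ℝ)
    (n : ℕ) (hn : 1 ≤ n) (ℓ : ℤ → ℝ) :
    (⋃ t ∈ {t : ℝ × ℝ | ∃ r s : ℤ, t = ((r : ℝ) + ℓ s, (s : ℝ) / (p : ℝ) ^ n)},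
        (· + t) '' Gset p m ε (List.replicate n 0)) = Set.univ ∧
    ∀ t ∈ {t : ℝ × ℝ | ∃ r s : ℤ, t = ((r : ℝ) + ℓ s, (s : ℝ) / (p : ℝ) ^ n)},
      ∀ t' ∈ {t : ℝ × ℝ | ∃ r s : ℤ, t = ((r : ℝ) + ℓ s, (s : ℝ) / (p : ℝ) ^ n)}, t ≠ t' →
        MeasureTheory.volume
          (((· + t) '' Gset p m ε (List.replicate n 0)) ∩
            ((· + t') '' Gset p m ε (List.replicate n 0))) = 0 :=
  stmt9_general m hm p hp ε n ℓ
end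
end

section
/- If ε is irrational, then the set of difference vectors { d − d' : d, d' ∈ D_{ε,∞}, ‖d − d'‖ ≤ √2 } is infinite; consequently the tiling T_ε + D_{ε,∞} fails the local finiteness property and is not quasi-periodic. -/
/-!
For every `k`, the vector `(fract (ε p^k), 1)` is a difference `d - d'` of two points of
`D_{ε,∞}`. Away from digit `k`, the vertical digits of `d'` are the negatives of those of `d`,
so the shifts `b_j` cancel there; at digit `k`, `d` has vertical digit `±1` (odd) and `d'` has
`0`, which leaves `ε p^k`. Taking vertical digits `∓m` below `k` makes the second coordinate
`|p|^k - 2m (1 + |p| + ⋯ + |p|^(k-1)) = 1`, and the horizontal digits of `d` write `-⌊ε p^k⌋`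
in balanced base `p`. Since `ε` is irrational, these vectors are pairwise distinct.
-/

noncomputable section

/-- The digit set `D_ε = {(i + b_j, j) : i, j ∈ {-m, …, m}}`. -/
def Ddig (m : ℕ) (ε : ℝ) : Set (ℝ × ℝ) :=
  {d | ∃ i j : ℤ, |i| ≤ (m : ℤ) ∧ |j| ≤ (m : ℤ) ∧ d = ((i : ℝ) + bshift ε j, (j : ℝ))}

/-- `D_{ε,∞} = {∑_{j=0}^{k-1} p^j d_j : k ≥ 1, d_0, …, d_{k-1} ∈ D_ε}`. -/
def Dinf (p : ℤ) (m : ℕ) (ε : ℝ) : Set (ℝ × ℝ) :=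
  {x | ∃ k : ℕ, 1 ≤ k ∧ ∃ d : ℕ → ℝ × ℝ, (∀ l, l < k → d l ∈ Ddig m ε) ∧
      x = ∑ l ∈ Finset.range k, (p : ℝ) ^ l • d l}

def eucNorm (z : ℝ × ℝ) : ℝ := Real.sqrt (z.1 ^ 2 + z.2 ^ 2)


open Finset

lemma bshift_neg (ε : ℝ) (j : ℤ) : bshift ε (-j) = bshift ε j := by
  simp [bshift, odd_neg]

section digits

variable {p : ℤ} {m : ℕ}

def digitVec (ε : ℝ) (i j : ℤ) : ℝ × ℝ := ((i : ℝ) + bshift ε j, (j : ℝ))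

lemma sum_digitVec_mem_Dinf {ε : ℝ} {K : ℕ} (hK : 1 ≤ K) {i j : ℕ → ℤ}
    (hi : ∀ l, |i l| ≤ m) (hj : ∀ l, |j l| ≤ m) :
    ∑ l ∈ range K, (p : ℝ) ^ l • digitVec ε (i l) (j l) ∈ Dinf p m ε :=
  ⟨K, hK, fun l => digitVec ε (i l) (j l), fun l _ => ⟨i l, j l, hi l, hj l, rfl⟩, rfl⟩

lemma exists_balanced_remainder (hp : |p| = 2 * m + 1) (A : ℤ) :
    ∃ c r : ℤ, |r| ≤ m ∧ A = p * c + r := by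
  have hq : (p.natAbs : ℤ) = 2 * m + 1 := by rw [Int.natCast_natAbs, hp]
  have hq0 : 0 < p.natAbs := by omega
  refine ⟨p.sign * A.bdiv p.natAbs, A.bmod p.natAbs, abs_le.2 ⟨?_, ?_⟩, ?_⟩
  · have := Int.le_bmod (x := A) hq0; omega
  · have := Int.bmod_le (x := A) hq0; omega
  · rw [← mul_assoc, mul_comm p, Int.sign_mul_self_eq_abs, ← Int.natCast_natAbs,
      Int.bdiv_add_bmod]

theorem exists_balanced_digits (hp : |p| = 2 * m + 1) :
    ∀ (K : ℕ) (A : ℤ), 2 * |A| < |p| ^ K →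
      ∃ i : ℕ → ℤ, (∀ l, |i l| ≤ m) ∧ A = ∑ l ∈ range K, p ^ l * i l
  | 0, A, hA => by
    refine ⟨0, by simp, ?_⟩
    have := abs_nonneg A
    simp only [pow_zero] at hA
    simp only [range_zero, sum_empty]
    exact abs_eq_zero.1 (by omega)
  | K + 1, A, hA => by
    obtain ⟨c, r, hr, rfl⟩ := exists_balanced_remainder hp A
    have hc : 2 * |c| < |p| ^ K := by
      have h1 : |p| * (2 * |c|) < |p| * (|p| ^ K + 1) := by
        calc |p| * (2 * |c|) = 2 * |p * c + r - r| := by rw [add_sub_cancel_right, abs_mul]; ring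
          _ ≤ 2 * |p * c + r| + 2 * |r| := by linarith [abs_sub (p * c + r) r]
          _ < |p| * (|p| ^ K + 1) := by rw [pow_succ] at hA; linarith
      have h2 := lt_of_mul_lt_mul_left h1 (abs_nonneg p)
      obtain ⟨t, ht⟩ : Odd (|p| ^ K) := (show Odd |p| from ⟨m, hp⟩).pow
      omega
    obtain ⟨i, hi, rfl⟩ := exists_balanced_digits hp K c hc
    refine ⟨fun | 0 => r | l + 1 => i l, fun | 0 => hr | l + 1 => hi l, ?_⟩
    simp only [sum_range_succ', pow_succ', pow_zero, one_mul, mul_assoc, mul_sum]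

lemma two_mul_abs_lt_pow (hm : 1 ≤ m) (hp : |p| = 2 * m + 1) {A : ℤ} {K : ℕ}
    (hAK : |A| ≤ K) : 2 * |A| < |p| ^ K := by
  have := one_add_mul_le_pow (a := (2 * m : ℤ)) (by omega) K
  rw [hp, add_comm]
  nlinarith

lemma exists_vertical_digits (hm : 1 ≤ m) (hp : |p| = 2 * m + 1) (ε : ℝ) {k K : ℕ}
    (hkK : k < K) :
    ∃ j j' : ℕ → ℤ, (∀ l, |j l| ≤ m) ∧ (∀ l, |j' l| ≤ m) ∧
      ∑ l ∈ range K, p ^ l * (j l - j' l) = 1 ∧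
      ∑ l ∈ range K, (p : ℝ) ^ l * (bshift ε (j l) - bshift ε (j' l)) = ε * p ^ k := by
  have hp0 : p ≠ 0 := abs_pos.1 (by omega)
  set σ := p.sign
  have hσ : ∀ l : ℕ, |σ ^ l| = 1 := fun l => by
    rw [abs_pow, Int.abs_sign_of_ne_zero hp0, one_pow]
  have hpσ : ∀ l : ℕ, p ^ l * σ ^ l = |p| ^ l := fun l => by
    rw [← mul_pow, mul_comm, Int.sign_mul_self_eq_abs]
  set j : ℕ → ℤ := fun l => if l < k then -(σ ^ l * m) else if l = k then σ ^ k else 0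
  set j' : ℕ → ℤ := fun l => if l = k then 0 else -j l
  have hj : ∀ l, |j l| ≤ m := fun l => by
    simp only [j]
    split_ifs
    · rw [abs_neg, abs_mul, hσ, one_mul, Nat.abs_cast]
    · rw [hσ]; exact_mod_cast hm
    · simp
  have hj' : ∀ l, |j' l| ≤ m := fun l => by
    simp only [j']
    split_ifs
    · simp
    · rw [abs_neg]; exact hj l
  refine ⟨j, j', hj, hj', ?_, ?_⟩
  · have htail : ∀ l ≥ k + 1, p ^ l * (j l - j' l) = 0 := fun l hl => by
      simp [j, j', show ¬ l < k by omega, show l ≠ k by omega]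
    have hlow : ∀ l ∈ range k, p ^ l * (j l - j' l) = -(|p| ^ l * (|p| - 1)) := fun l hl => by
      have hl : l < k := mem_range.1 hl
      simp only [j, j', if_pos hl, if_neg hl.ne]
      linear_combination (-2 * m : ℤ) * hpσ l + |p| ^ l * hp
    rw [eventually_constant_sum htail hkK, sum_range_succ, sum_congr rfl hlow, sum_neg_distrib,
      ← sum_mul, geom_sum_mul]
    simp only [j, j', lt_irrefl, if_false, if_true, sub_zero, hpσ]
    ring
  · rw [sum_eq_single_of_mem k (mem_range.2 hkK) fun l _ hl => by simp [j', hl, bshift_neg]]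
    rcases (abs_eq zero_le_one).1 (hσ k) with h | h <;> simp [j, j', bshift, h, mul_comm]

open Pointwise in
theorem intCast_add_mul_pow_mem_Dinf_sub (hm : 1 ≤ m) (hp : |p| = 2 * m + 1)
    (ε : ℝ) (A : ℤ) (k : ℕ) :
    ((A : ℝ) + ε * p ^ k, (1 : ℝ)) ∈ Dinf p m ε - Dinf p m ε := by
  set K := k + 1 + A.natAbs
  have hAK : |A| ≤ K := by rw [Int.abs_eq_natAbs]; omega
  obtain ⟨i, hi, hiA⟩ := exists_balanced_digits hp K A (two_mul_abs_lt_pow hm hp hAK)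
  obtain ⟨j, j', hj, hj', hjj', hbb'⟩ := exists_vertical_digits hm hp ε (show k < K by omega)
  refine Set.mem_sub.2 ⟨_, sum_digitVec_mem_Dinf (K := K) (by omega) hi hj, _,
    sum_digitVec_mem_Dinf (K := K) (i := 0) (by omega) (fun _ => by simp) hj', ?_⟩
  rw [← sum_sub_distrib]
  ext
  · simp only [Prod.fst_sum, digitVec, Prod.fst_sub, Prod.smul_fst, smul_eq_mul, Pi.zero_apply,
      Int.cast_zero, zero_add]
    rw [← hbb', hiA]
    push_cast
    rw [← sum_add_distrib]
    exact sum_congr rfl fun l _ => by ring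
  · simp only [Prod.snd_sum, digitVec, Prod.snd_sub, Prod.smul_snd, smul_eq_mul]
    rw [← Int.cast_one (R := ℝ), ← hjj']
    push_cast
    exact sum_congr rfl fun l _ => by ring

end digits

lemma Irrational.injective_fract_mul_pow {ε : ℝ} (hε : Irrational ε) {p : ℤ}
    (hp : 1 < p.natAbs) : Function.Injective fun k : ℕ => Int.fract (ε * p ^ k) := by
  intro k k' h
  obtain ⟨z, hz⟩ := Int.fract_eq_fract.1 h
  by_contra hkk
  have hne : p ^ k - p ^ k' ≠ 0 := sub_ne_zero.2 fun h => hkk (Int.pow_right_injective hp h)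
  apply (hε.mul_intCast hne).ne_int z
  push_cast
  linear_combination hz

/-- if `ε` is irrational then the set of difference vectors of `D_{ε,∞}`
of Euclidean norm at most `√2` is infinite (failure of local finiteness). -/
theorem stmt15 (p : ℤ) (m : ℕ) (hm : 1 ≤ m) (hp : |p| = 2 * (m : ℤ) + 1) (ε : ℝ)
    (hε : Irrational ε) :
    {v : ℝ × ℝ | ∃ d ∈ Dinf p m ε, ∃ d' ∈ Dinf p m ε,
        v = d - d' ∧ eucNorm v ≤ Real.sqrt 2}.Infinite := by
  have hp1 : 1 < p.natAbs := by rw [Int.abs_eq_natAbs] at hp; omega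
  refine Set.infinite_of_injective_forall_mem
    (f := fun k : ℕ => (Int.fract (ε * p ^ k), (1 : ℝ)))
    (fun k k' h => hε.injective_fract_mul_pow hp1 (congrArg Prod.fst h)) fun k => ?_
  obtain ⟨d, hd, d', hd', hdd'⟩ :=
    Set.mem_sub.1 (intCast_add_mul_pow_mem_Dinf_sub hm hp ε (-⌊ε * p ^ k⌋) k)
  refine ⟨d, hd, d', hd', ?_, ?_⟩
  · rw [hdd', Int.fract]
    push_cast
    ring_nf
  · have h0 := Int.fract_nonneg (ε * p ^ k)
    have h1 := Int.fract_lt_one (ε * p ^ k)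
    exact Real.sqrt_le_sqrt (by nlinarith)
end
end
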